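/- arXiv:2004.04068 — 3 statements merged into one kernel-verified Lean document; each statement's English description precedes it below -/
import Mathlib

section
/- Let H be a quasi-ideal of a Leibniz algebra L over a field F with core H_L = 0. Then one of the following occurs: (i) H = 0; (ii) H has codimension one in L (dim(L/H) = 1); (iii) L is a Lie algebra ([x,x] = 0 for all x ∈ L) which is either almost abelian or isomorphic to the three-dimensional algebra K₂ (which occurs only when F has characteristic 2); (iv) L = I ∔ Fh (vector-space direct sum) where I is the span of all squares [x,x], and [x,h] = x, [h,x] = 0 for all x ∈ I, and [h,h] = 0. -/
/-! Basic definitions for (right) Leibniz algebras given by a bilinear bracket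
on a vector space, following Towers, "Quasi-ideals of Leibniz algebras". -/

section LeibnizDefs

variable {F L : Type*} [Field F] [AddCommGroup L] [Module F L]

/-- The (right) Leibniz identity for a bilinear bracket `b`:
`[x,[y,z]] = [[x,y],z] - [[x,z],y]`. -/
def IsLeibniz (b : L →ₗ[F] L →ₗ[F] L) : Prop :=
  ∀ x y z : L, b x (b y z) = b (b x y) z - b (b x z) y

/-- `[A,C]`: the span of all brackets `[a,c]` with `a ∈ A`, `c ∈ C`. -/
def bspan (b : L →ₗ[F] L →ₗ[F] L) (A C : Submodule F L) : Submodule F L :=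
  Submodule.span F {z : L | ∃ a ∈ A, ∃ c ∈ C, z = b a c}

/-- A subalgebra is a subspace `H` with `[H,H] ⊆ H`. -/
def IsSubalgebra (b : L →ₗ[F] L →ₗ[F] L) (H : Submodule F L) : Prop :=
  bspan b H H ≤ H

/-- An ideal is a subspace `A` with `[A,L] + [L,A] ⊆ A`. -/
def IsIdeal (b : L →ₗ[F] L →ₗ[F] L) (A : Submodule F L) : Prop :=
  bspan b A ⊤ ⊔ bspan b ⊤ A ≤ A

/-- A quasi-ideal of `L` is a subspace `H` with `[H,K] + [K,H] ⊆ H + K`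
for every subspace `K` of `L`. -/
def IsQuasiIdeal (b : L →ₗ[F] L →ₗ[F] L) (H : Submodule F L) : Prop :=
  ∀ K : Submodule F L, bspan b H K ⊔ bspan b K H ≤ H ⊔ K

/-- `H` is a quasi-ideal of the subalgebra `E`: `H ⊆ E` and
`[H,K] + [K,H] ⊆ H + K` for every subspace `K` of `E`. -/
def IsQuasiIdealIn (b : L →ₗ[F] L →ₗ[F] L) (H E : Submodule F L) : Prop :=
  H ≤ E ∧ ∀ K : Submodule F L, K ≤ E → bspan b H K ⊔ bspan b K H ≤ H ⊔ K

/-- `H` is an `m`-step subquasi-ideal of `L`: there is a chain of subalgebras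
`H = H_m qu H_{m-1} qu ... qu H_0 = L`, each a quasi-ideal of the next.
(Here `C i` is `H_i`.) -/
def IsSubquasiIdealSteps (b : L →ₗ[F] L →ₗ[F] L) (m : ℕ) (H : Submodule F L) : Prop :=
  ∃ C : ℕ → Submodule F L, C 0 = ⊤ ∧ C m = H ∧
    (∀ i ≤ m, IsSubalgebra b (C i)) ∧
    ∀ i < m, IsQuasiIdealIn b (C (i + 1)) (C i)

/-- `H` is a subquasi-ideal of `L` if it is an `m`-step subquasi-ideal for some `m`. -/
def IsSubquasiIdeal (b : L →ₗ[F] L →ₗ[F] L) (H : Submodule F L) : Prop :=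
  ∃ m : ℕ, IsSubquasiIdealSteps b m H

/-- Lower central series: `lowerCentral b K n` is `K^{n+1}` in the paper's notation,
i.e. `K^1 = K`, `K^{k+1} = [K^k, K]`. -/
def lowerCentral (b : L →ₗ[F] L →ₗ[F] L) (K : Submodule F L) : ℕ → Submodule F L
  | 0 => K
  | n + 1 => bspan b (lowerCentral b K n) K

/-- Derived series: `derSeries b H n` is `H^{(n+1)}` in the paper's notation,
i.e. `H^{(1)} = H`, `H^{(k+1)} = [H^{(k)}, H^{(k)}]`. -/
def derSeries (b : L →ₗ[F] L →ₗ[F] L) (H : Submodule F L) : ℕ → Submodule F L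
  | 0 => H
  | n + 1 => bspan b (derSeries b H n) (derSeries b H n)

/-- The core `H_L` of `H`: the sum of all ideals of `L` contained in `H`. -/
def coreOf (b : L →ₗ[F] L →ₗ[F] L) (H : Submodule F L) : Submodule F L :=
  sSup {A : Submodule F L | IsIdeal b A ∧ A ≤ H}

/-- A derivation of the bracket `b`. -/
def IsDerivation (b : L →ₗ[F] L →ₗ[F] L) (d : L →ₗ[F] L) : Prop :=
  ∀ x y : L, d (b x y) = b (d x) y + b x (d y)

/-- `I`: the span of all squares `[x,x]`, `x ∈ L`. -/
def sqSpan (b : L →ₗ[F] L →ₗ[F] L) : Submodule F L :=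
  Submodule.span F {z : L | ∃ x : L, z = b x x}

/-- The centre `Z(L) = {z | [z,x] = [x,z] = 0 for all x}`. -/
def lcenter (b : L →ₗ[F] L →ₗ[F] L) : Submodule F L where
  carrier := {z : L | ∀ x : L, b z x = 0 ∧ b x z = 0}
  zero_mem' := by intro x; simp
  add_mem' := by
    intro y z hy hz x
    obtain ⟨h1, h2⟩ := hy x
    obtain ⟨h3, h4⟩ := hz x
    constructor <;> simp [h1, h2, h3, h4]
  smul_mem' := by
    intro c z hz x
    obtain ⟨h1, h2⟩ := hz x
    constructor <;> simp [h1, h2]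

/-- The centre of a subalgebra `E`, as a subspace of `L`:
`Z(E) = {z ∈ E | [z,x] = [x,z] = 0 for all x ∈ E}`. -/
def centerIn (b : L →ₗ[F] L →ₗ[F] L) (E : Submodule F L) : Submodule F L where
  carrier := {z : L | z ∈ E ∧ ∀ x ∈ E, b z x = 0 ∧ b x z = 0}
  zero_mem' := ⟨E.zero_mem, by intro x _; simp⟩
  add_mem' := by
    intro y z hy hz
    refine ⟨E.add_mem hy.1 hz.1, fun x hx => ?_⟩
    obtain ⟨h1, h2⟩ := hy.2 x hx
    obtain ⟨h3, h4⟩ := hz.2 x hx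
    constructor <;> simp [h1, h2, h3, h4]
  smul_mem' := by
    intro c z hz
    refine ⟨E.smul_mem c hz.1, fun x hx => ?_⟩
    obtain ⟨h1, h2⟩ := hz.2 x hx
    constructor <;> simp [h1, h2]

/-- The subalgebra generated by a set `S`. -/
def subalgGen (b : L →ₗ[F] L →ₗ[F] L) (S : Set L) : Submodule F L :=
  sInf {K : Submodule F L | IsSubalgebra b K ∧ S ⊆ K}

/-- `x` is a left Engel element: for each `y` there is `n` with `R_x^n(y) = 0`,
where `R_x(y) = [y,x]`. -/
def IsLeftEngel (b : L →ₗ[F] L →ₗ[F] L) (x : L) : Prop :=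
  ∀ y : L, ∃ n : ℕ, ((b.flip x) ^ n) y = 0

end LeibnizDefs

variable {F L : Type*} [Field F] [AddCommGroup L] [Module F L]

/-! For `h ∈ H` the quasi-ideal condition says that `[h, ·]` and `[·, h]` map every line `Fx`
into `H + Fx`, so they act on `L ⧸ H` as scalars `α h` and `β h`, with `α`, `β` linear.
If `L ⧸ H` has dimension at least two, testing the Leibniz identity against linear forms that
vanish on `H` shows that `H ∩ ker β` (if `α` vanishes on `H`) or `H ∩ ker α` (otherwise; then
`β = -α` on `H`) is an ideal. The core being trivial, `H` is `0` or a line `F h₀`, and the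
Leibniz identity then determines the multiplication: in the first case `h₀` is as in (iv); in
the second, `I ⊆ F h₀` forces `I = 0`, and `[h₀, x] ∈ x + F h₀` makes `L` almost abelian unless
the `h₀`-coefficient of some bracket is nonzero, which happens only for `K₂` in characteristic
two. -/

open Submodule

section Leibniz

variable {b : L →ₗ[F] L →ₗ[F] L}

lemma mem_bspan {A C : Submodule F L} {a c : L} (ha : a ∈ A) (hc : c ∈ C) :
    b a c ∈ bspan b A C :=
  subset_span ⟨a, ha, c, hc, rfl⟩

lemma bspan_le {A C X : Submodule F L} (h : ∀ a ∈ A, ∀ c ∈ C, b a c ∈ X) :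
    bspan b A C ≤ X := by
  rw [bspan, span_le]
  rintro _ ⟨a, ha, c, hc, rfl⟩
  exact h a ha c hc

lemma sq_mem_sqSpan (x : L) : b x x ∈ sqSpan b :=
  subset_span ⟨x, rfl⟩

lemma add_swap_mem_sqSpan (x y : L) : b x y + b y x ∈ sqSpan b := by
  have h : b x y + b y x = b (x + y) (x + y) - b x x - b y y := by
    simp only [map_add, LinearMap.add_apply]; abel
  rw [h]
  exact sub_mem (sub_mem (sq_mem_sqSpan _) (sq_mem_sqSpan _)) (sq_mem_sqSpan _)

lemma swap_eq_neg_of_sq_eq_zero (hsq : ∀ x, b x x = 0) (x y : L) : b y x = -b x y := by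
  have h : b y x + b x y = 0 := by
    simpa [map_add, hsq] using hsq (x + y)
  exact eq_neg_of_add_eq_zero_left h

lemma IsLeibniz.bracket_eq_zero_of_mem_sqSpan (hb : IsLeibniz b) {z : L} (hz : z ∈ sqSpan b)
    (x : L) : b x z = 0 := by
  induction hz using span_induction with
  | mem _ hw =>
    obtain ⟨y, rfl⟩ := hw
    simpa using hb x y y
  | zero => simp
  | add u v _ _ hu hv => simp [hu, hv]
  | smul c u _ hu => simp [hu]

lemma IsLeibniz.bracket_mem_sqSpan_of_mem (hb : IsLeibniz b) {z : L} (hz : z ∈ sqSpan b)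
    (y : L) : b z y ∈ sqSpan b := by
  induction hz using span_induction with
  | mem _ hw =>
    obtain ⟨x, rfl⟩ := hw
    have h : b (b x x) y = b x (b x y) + b (b x y) x := by rw [hb x x y]; abel
    rw [h]
    exact add_swap_mem_sqSpan _ _
  | zero => simp
  | add u v _ _ hu hv => simpa using add_mem hu hv
  | smul c u _ hu => simpa using smul_mem _ c hu

lemma IsLeibniz.isIdeal_sqSpan (hb : IsLeibniz b) : IsIdeal b (sqSpan b) :=
  sup_le (bspan_le fun _ ha c _ => hb.bracket_mem_sqSpan_of_mem ha c)
    (bspan_le fun a _ _ hc => by rw [hb.bracket_eq_zero_of_mem_sqSpan hc a]; exact zero_mem _)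

lemma eq_bot_of_coreOf_eq_bot {H A : Submodule F L} (hcore : coreOf b H = ⊥)
    (hA : IsIdeal b A) (hAH : A ≤ H) : A = ⊥ :=
  le_bot_iff.1 (hcore ▸ le_sSup ⟨hA, hAH⟩)

lemma IsQuasiIdeal.bracket_mem {H : Submodule F L} (hH : IsQuasiIdeal b H) {h k : L}
    (hh : h ∈ H) (hk : k ∈ H) : b h k ∈ H := by
  simpa using hH H (mem_sup_left (mem_bspan hh hk))

lemma IsQuasiIdeal.exists_left {H : Submodule F L} (hH : IsQuasiIdeal b H) {h : L} (hh : h ∈ H)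
    (x : L) : ∃ c : F, b h x - c • x ∈ H := by
  obtain ⟨u, hu, v, hv, huv⟩ :=
    mem_sup.1 (hH (F ∙ x) (mem_sup_left (mem_bspan hh (mem_span_singleton_self x))))
  obtain ⟨c, rfl⟩ := mem_span_singleton.1 hv
  exact ⟨c, by rwa [← huv, add_sub_cancel_right]⟩

lemma IsQuasiIdeal.exists_right {H : Submodule F L} (hH : IsQuasiIdeal b H) {h : L} (hh : h ∈ H)
    (x : L) : ∃ c : F, b x h - c • x ∈ H := by
  obtain ⟨u, hu, v, hv, huv⟩ :=
    mem_sup.1 (hH (F ∙ x) (mem_sup_right (mem_bspan (mem_span_singleton_self x) hh)))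
  obtain ⟨c, rfl⟩ := mem_span_singleton.1 hv
  exact ⟨c, by rwa [← huv, add_sub_cancel_right]⟩

end Leibniz

section LinearAlgebra

variable {H : Submodule F L}

lemma exists_le_ker_apply_eq_one (hH : H ≠ ⊤) :
    ∃ ψ : L →ₗ[F] F, H ≤ LinearMap.ker ψ ∧ ∃ x, ψ x = 1 := by
  obtain ⟨x, hx⟩ : ∃ x, x ∉ H := by simpa [eq_top_iff'] using hH
  obtain ⟨f, hfx, hf⟩ := H.exists_dual_map_eq_bot_of_notMem hx inferInstance
  refine ⟨(f x)⁻¹ • f, fun h hh => ?_, x, by simp [hfx]⟩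
  have hfh : f h ∈ H.map f := mem_map_of_mem hh
  rw [hf, mem_bot] at hfh
  simp [hfh]

lemma sub_smul_mem_of_forall_exists_sub_smul_mem {f : L →ₗ[F] L}
    (hf : ∀ x, ∃ c : F, f x - c • x ∈ H) {ψ : L →ₗ[F] F} (hψ : H ≤ LinearMap.ker ψ)
    {x₀ : L} (hx₀ : ψ x₀ = 1) (x : L) : f x - ψ (f x₀) • x ∈ H := by
  have hfH : H ≤ H.comap f := fun y hy => by
    obtain ⟨c, hc⟩ := hf y
    simpa using add_mem hc (smul_mem H c hy)
  obtain ⟨a, ha⟩ := (H.mapQ H f hfH).exists_eq_smul_id_of_forall_notLinearIndependent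
    fun v => by
      obtain ⟨y, rfl⟩ := H.mkQ_surjective v
      obtain ⟨c, hc⟩ := hf y
      rw [LinearIndependent.pair_iff]
      intro hind
      have hdep : c • H.mkQ y + (-1 : F) • H.mapQ H f hfH (H.mkQ y) = 0 := by
        rw [neg_one_smul, mkQ_apply, mapQ_apply, ← Quotient.mk_smul, ← Quotient.mk_neg,
          ← Quotient.mk_add, Quotient.mk_eq_zero, ← sub_eq_add_neg, ← neg_sub]
        exact neg_mem hc
      simpa using (hind _ _ hdep).2
  have hsub : ∀ y, f y - a • y ∈ H := fun y => by
    rw [← Quotient.mk_eq_zero, Quotient.mk_sub, Quotient.mk_smul]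
    simpa [sub_eq_zero] using LinearMap.congr_fun ha (H.mkQ y)
  have hψa : ψ (f x₀) = a := by simpa [hx₀, sub_eq_zero] using hψ (hsub x₀)
  exact hψa ▸ hsub x

lemma rank_quotient_eq_one_of_sup_span_eq_top {x : L} (hx : x ∉ H) (hH : H ⊔ (F ∙ x) = ⊤) :
    Module.rank F (L ⧸ H) = 1 := by
  refine rank_eq_one (H.mkQ x) (by simpa using hx) fun w => ?_
  obtain ⟨y, rfl⟩ := H.mkQ_surjective w
  obtain ⟨u, hu, v, hv, rfl⟩ := mem_sup.1 (hH ▸ mem_top : y ∈ H ⊔ (F ∙ x))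
  obtain ⟨c, rfl⟩ := mem_span_singleton.1 hv
  exact ⟨c, by simp [(Quotient.mk_eq_zero H).2 hu]⟩

lemma exists_eq_span_singleton_of_inf_ker_eq_bot {ν : L →ₗ[F] F}
    (hH : H ⊓ LinearMap.ker ν = ⊥) {h : L} (hh : h ∈ H) (hνh : ν h ≠ 0) :
    ∃ h₀, H = F ∙ h₀ ∧ ν h₀ = 1 := by
  refine ⟨(ν h)⁻¹ • h, le_antisymm (fun k hk => ?_) ?_, by simp [hνh]⟩
  · have hker : k - ν k • (ν h)⁻¹ • h ∈ H ⊓ LinearMap.ker ν :=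
      ⟨sub_mem hk (smul_mem _ _ (smul_mem _ _ hh)), by simp [hνh]⟩
    rw [hH, mem_bot, sub_eq_zero] at hker
    rw [hker]
    exact smul_mem _ _ (mem_span_singleton_self _)
  · rw [span_le, Set.singleton_subset_iff]
    exact smul_mem _ _ hh

lemma exists_eq_smul_of_forall_mem_span_singleton {h₀ : L} (hh₀ : h₀ ≠ 0) {g : L →ₗ[F] L}
    (hg : ∀ x, g x ∈ F ∙ h₀) : ∃ f : L →ₗ[F] F, ∀ x, g x = f x • h₀ :=
  ⟨(LinearEquiv.toSpanNonzeroSingleton F L h₀ hh₀).symm.toLinearMap ∘ₗ g.codRestrict _ hg,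
    fun x => by simp⟩

lemma isCompl_ker_span_singleton {f : L →ₗ[F] F} {a : L} (ha : f a = 1) :
    IsCompl (LinearMap.ker f) (F ∙ a) := by
  refine IsCompl.of_eq (eq_bot_iff.2 fun z hz => ?_) (eq_top_iff'.2 fun x => ?_)
  · obtain ⟨hzf, hza⟩ := mem_inf.1 hz
    obtain ⟨c, rfl⟩ := mem_span_singleton.1 hza
    rw [mem_bot, show c = 0 by simpa [ha] using hzf, zero_smul]
  · rw [← sub_add_cancel x (f x • a)]
    exact add_mem_sup (by simp [ha]) (smul_mem _ _ (mem_span_singleton_self a))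

end LinearAlgebra

section ScalarAction

variable {b : L →ₗ[F] L →ₗ[F] L} {H : Submodule F L}

def IsLeftScalar (b : L →ₗ[F] L →ₗ[F] L) (H : Submodule F L) (α : L →ₗ[F] F) : Prop :=
  ∀ h ∈ H, ∀ x, b h x - α h • x ∈ H

def IsRightScalar (b : L →ₗ[F] L →ₗ[F] L) (H : Submodule F L) (β : L →ₗ[F] F) : Prop :=
  ∀ h ∈ H, ∀ x, b x h - β h • x ∈ H

variable {ψ : L →ₗ[F] F} {x₀ : L}

lemma IsQuasiIdeal.isLeftScalar (hH : IsQuasiIdeal b H) (hψ : H ≤ LinearMap.ker ψ)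
    (hx₀ : ψ x₀ = 1) : IsLeftScalar b H (ψ ∘ₗ b.flip x₀) := fun _ hh =>
  sub_smul_mem_of_forall_exists_sub_smul_mem (hH.exists_left hh) hψ hx₀

lemma IsQuasiIdeal.isRightScalar (hH : IsQuasiIdeal b H) (hψ : H ≤ LinearMap.ker ψ)
    (hx₀ : ψ x₀ = 1) : IsRightScalar b H (ψ ∘ₗ b x₀) := fun _ hh =>
  sub_smul_mem_of_forall_exists_sub_smul_mem (f := b.flip _) (hH.exists_right hh) hψ hx₀

variable {α β : L →ₗ[F] F}

lemma IsLeftScalar.apply_bracket (hα : IsLeftScalar b H α) (hψ : H ≤ LinearMap.ker ψ) {h : L}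
    (hh : h ∈ H) (x : L) : ψ (b h x) = α h * ψ x := by
  simpa [sub_eq_zero] using hψ (hα h hh x)

lemma IsRightScalar.apply_bracket (hβ : IsRightScalar b H β) (hψ : H ≤ LinearMap.ker ψ) {h : L}
    (hh : h ∈ H) (x : L) : ψ (b x h) = β h * ψ x := by
  simpa [sub_eq_zero] using hψ (hβ h hh x)

lemma IsLeftScalar.map_bracket_eq_zero (hb : IsLeibniz b) (hH : IsQuasiIdeal b H)
    (hα : IsLeftScalar b H α) (hβ : IsRightScalar b H β) (hψ : H ≤ LinearMap.ker ψ)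
    (hx₀ : ψ x₀ = 1) {h k : L} (hh : h ∈ H) (hk : k ∈ H) : α (b h k) = 0 := by
  have e := congrArg ψ (hb h x₀ k)
  simp only [map_sub, hα.apply_bracket hψ hh, hβ.apply_bracket hψ hk,
    hα.apply_bracket hψ (hH.bracket_mem hh hk), hx₀] at e
  linear_combination e

lemma IsLeftScalar.mul_add_eq_zero (hb : IsLeibniz b) (hH : IsQuasiIdeal b H)
    (hα : IsLeftScalar b H α) (hβ : IsRightScalar b H β) (hψ : H ≤ LinearMap.ker ψ)
    (hx₀ : ψ x₀ = 1) {h k : L} (hh : h ∈ H) (hk : k ∈ H) : α h * (α k + β k) = 0 := by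
  have e := congrArg ψ (hb h k x₀)
  simp only [map_sub, hα.apply_bracket hψ hh, hα.apply_bracket hψ hk, hβ.apply_bracket hψ hk,
    hα.apply_bracket hψ (hH.bracket_mem hh hk), hα.map_bracket_eq_zero hb hH hβ hψ hx₀ hh hk,
    hx₀] at e
  linear_combination e

lemma IsRightScalar.eq_zero_of_mem_sqSpan (hb : IsLeibniz b) (hβ : IsRightScalar b H β)
    (hψ : H ≤ LinearMap.ker ψ) (hx₀ : ψ x₀ = 1) {z : L} (hz : z ∈ H) (hzI : z ∈ sqSpan b) :
    β z = 0 := by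
  simpa [hb.bracket_eq_zero_of_mem_sqSpan hzI, hx₀] using (hβ.apply_bracket hψ hz x₀).symm

lemma isIdeal_inf_ker {ν : L →ₗ[F] F} (hνI : ∀ z ∈ H, z ∈ sqSpan b → ν z = 0)
    (hleft : ∀ a ∈ H, ν a = 0 → ∀ x, b a x ∈ H ∧ ν (b a x) = 0)
    (hright : ∀ a ∈ H, ν a = 0 → ∀ x, b x a ∈ H) :
    IsIdeal b (H ⊓ LinearMap.ker ν) := by
  refine sup_le (bspan_le fun a ha x _ => ?_) (bspan_le fun x _ a ha => ?_)
  · obtain ⟨ha, hνa⟩ := mem_inf.1 ha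
    exact mem_inf.2 (hleft a ha hνa x)
  · obtain ⟨ha, hνa⟩ := mem_inf.1 ha
    obtain ⟨haxH, hax⟩ := hleft a ha hνa x
    have hsym := hνI _ (add_mem (hright a ha hνa x) haxH) (add_swap_mem_sqSpan x a)
    rw [map_add, hax, add_zero] at hsym
    exact mem_inf.2 ⟨hright a ha hνa x, hsym⟩

lemma isIdeal_inf_ker_right (hb : IsLeibniz b) (hα : IsLeftScalar b H α)
    (hβ : IsRightScalar b H β) (hψ : H ≤ LinearMap.ker ψ) (hx₀ : ψ x₀ = 1)
    (hα0 : ∀ h ∈ H, α h = 0) : IsIdeal b (H ⊓ LinearMap.ker β) := by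
  have hβmem : ∀ a ∈ H, β a = 0 → ∀ x, b x a ∈ H := fun a ha hβa x => by
    simpa [hβa] using hβ a ha x
  refine isIdeal_inf_ker (fun z hz hzI => hβ.eq_zero_of_mem_sqSpan hb hψ hx₀ hz hzI)
    (fun a ha hβa x => ?_) hβmem
  have haxH : b a x ∈ H := by simpa [hα0 a ha] using hα a ha x
  have hx₀a := hβmem a ha hβa x₀
  have e := congrArg ψ (hb x₀ a x)
  simp only [map_sub, hβ.apply_bracket hψ haxH, hβ.apply_bracket hψ ha,
    hα.apply_bracket hψ hx₀a, hα0 _ hx₀a, hβa, hx₀] at e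
  exact ⟨haxH, by simpa using e⟩

lemma isIdeal_inf_ker_left (hb : IsLeibniz b) (hα : IsLeftScalar b H α)
    (hβ : IsRightScalar b H β) (hψ : H ≤ LinearMap.ker ψ) (hx₀ : ψ x₀ = 1)
    (hcodim : ∀ x, H ⊔ (F ∙ x) ≠ ⊤) (hβα : ∀ k ∈ H, β k = -α k) :
    IsIdeal b (H ⊓ LinearMap.ker α) := by
  refine isIdeal_inf_ker (fun z hz hzI => ?_) (fun a ha hαa x => ?_)
    (fun a ha hαa x => by simpa [hβα a ha, hαa] using hβ a ha x)
  · simpa [hβα z hz] using hβ.eq_zero_of_mem_sqSpan hb hψ hx₀ hz hzI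
  have haxH : ∀ y, b a y ∈ H := fun y => by simpa [hαa] using hα a ha y
  -- test against a form vanishing on `H` and on `x`, which exists as `H` has codimension `≥ 2`
  obtain ⟨ψ', hψ', y, hy⟩ := exists_le_ker_apply_eq_one (hcodim x)
  have hψ'H : H ≤ LinearMap.ker ψ' := le_sup_left.trans hψ'
  have hψ'x : ψ' x = 0 := hψ' (mem_sup_right (mem_span_singleton_self x))
  have e := congrArg ψ' (hb a x y)
  simp only [hα.apply_bracket hψ'H ha, hα.apply_bracket hψ'H (haxH _), map_sub, hαa, hψ'x,
    hy] at e
  exact ⟨haxH x, by simpa using e.symm⟩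

end ScalarAction

section Structure

variable {b : L →ₗ[F] L →ₗ[F] L}

def IsSqSpanComplement (b : L →ₗ[F] L →ₗ[F] L) (h : L) : Prop :=
  sqSpan b ⊓ (F ∙ h) = ⊥ ∧ sqSpan b ⊔ (F ∙ h) = ⊤ ∧
    (∀ x ∈ sqSpan b, b x h = x ∧ b h x = 0) ∧ b h h = 0

def IsAlmostAbelianWith (b : L →ₗ[F] L →ₗ[F] L) (a : L) : Prop :=
  bspan b ⊤ ⊤ ⊓ (F ∙ a) = ⊥ ∧ bspan b ⊤ ⊤ ⊔ (F ∙ a) = ⊤ ∧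
    bspan b (bspan b ⊤ ⊤) (bspan b ⊤ ⊤) = ⊥ ∧ ∀ x ∈ bspan b ⊤ ⊤, b x a = x

def IsK₂Basis (b : L →ₗ[F] L →ₗ[F] L) (x y z : L) : Prop :=
  LinearIndependent F ![x, y, z] ∧ span F {x, y, z} = ⊤ ∧ b x y = z ∧ b y z = y ∧ b z x = x

lemma IsLeibniz.isSqSpanComplement (hb : IsLeibniz b) {h₀ x₀ : L} (hx₀ : x₀ ∉ F ∙ h₀)
    (hl : ∀ y, b h₀ y ∈ F ∙ h₀) (hr : ∀ x, b x h₀ - x ∈ F ∙ h₀) :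
    IsSqSpanComplement b h₀ := by
  have hrc : ∀ x, ∃ c : F, b x h₀ = x + c • h₀ := fun x => by
    obtain ⟨c, hc⟩ := mem_span_singleton.1 (hr x)
    exact ⟨c, by rw [hc, add_sub_cancel]⟩
  have hleft : ∀ y, b h₀ y = 0 := fun y => by
    obtain ⟨a, ha⟩ := mem_span_singleton.1 (hl y)
    obtain ⟨c, hc⟩ := hrc x₀
    obtain ⟨d, hd⟩ := hrc (b x₀ y)
    have e := hb x₀ h₀ y
    simp only [← ha, hc, hd, map_add, map_smul, LinearMap.add_apply, LinearMap.smul_apply] at e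
    have hax₀ : a • x₀ ∈ F ∙ h₀ := by
      rw [show a • x₀ = (c * a - d - a * c) • h₀ by linear_combination (norm := module) e]
      exact smul_mem _ _ (mem_span_singleton_self h₀)
    have ha0 : a = 0 := by_contra fun ha0 => hx₀ ((smul_mem_iff _ ha0).1 hax₀)
    rw [← ha, ha0, zero_smul]
  have hfix : ∀ x y, b (b x y) h₀ = b x y := fun x y => by
    obtain ⟨c, hc⟩ := hrc x
    have e := hb x h₀ y
    simp only [hleft, hc, map_zero, map_add, map_smul, LinearMap.add_apply,
      LinearMap.smul_apply, smul_zero, add_zero] at e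
    exact (sub_eq_zero.1 e.symm).symm
  have hI : ∀ z ∈ sqSpan b, b z h₀ = z := fun z hz => by
    induction hz using span_induction with
    | mem _ hw => obtain ⟨x, rfl⟩ := hw; exact hfix x x
    | zero => simp
    | add u v _ _ hu hv => simp [hu, hv]
    | smul c u _ hu => simp [hu]
  have hmemI : ∀ x, b x h₀ ∈ sqSpan b := fun x => by
    have e : b x h₀ = b (b x h₀ + h₀) (b x h₀ + h₀) - b (b x h₀) (b x h₀) := by
      simp [hfix, hleft]
    rw [e]
    exact sub_mem (sq_mem_sqSpan _) (sq_mem_sqSpan _)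
  refine ⟨eq_bot_iff.2 fun z hz => ?_, eq_top_iff'.2 fun x => ?_,
    fun z hz => ⟨hI z hz, hleft z⟩, hleft h₀⟩
  · obtain ⟨hzI, hzh₀⟩ := mem_inf.1 hz
    obtain ⟨c, rfl⟩ := mem_span_singleton.1 hzh₀
    simpa [hleft] using (hI _ hzI).symm
  · rw [← sub_sub_cancel (b x h₀) x]
    exact sub_mem (mem_sup_left (hmemI x)) (mem_sup_right (hr x))

lemma IsLeibniz.sqSpan_le_span_singleton (hb : IsLeibniz b) {h₀ : L}
    (hl : ∀ x, b h₀ x - x ∈ F ∙ h₀) : sqSpan b ≤ F ∙ h₀ := fun z hz => by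
  simpa [hb.bracket_eq_zero_of_mem_sqSpan hz] using hl z

end Structure

section LieCase

variable {b : L →ₗ[F] L →ₗ[F] L} {h₀ : L} {θ : L →ₗ[F] F}

lemma bracket_eq_of_left_mul (hb : IsLeibniz b) (hLie : ∀ x, b x x = 0)
    (hl : ∀ x, b h₀ x = x + θ x • h₀) (x y : L) :
    b x y = θ y • x - θ x • y + θ (b x y) • h₀ := by
  have e := hb h₀ x y
  simp only [hl, map_add, map_smul, LinearMap.add_apply, LinearMap.smul_apply,
    swap_eq_neg_of_sq_eq_zero hLie x y] at e
  linear_combination (norm := module) -e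

lemma apply_self_eq_neg_one (hLie : ∀ x, b x x = 0) (hl : ∀ x, b h₀ x = x + θ x • h₀)
    (hh₀ : h₀ ≠ 0) : θ h₀ = -1 := by
  have e : (θ h₀ + 1) • h₀ = 0 := by rw [add_smul, one_smul, add_comm, ← hl, hLie]
  linear_combination (smul_eq_zero.1 e).resolve_right hh₀

lemma apply_bracket_left_eq_zero (hLie : ∀ x, b x x = 0) (hl : ∀ x, b h₀ x = x + θ x • h₀)
    (hh₀ : h₀ ≠ 0) (w : L) : θ (b h₀ w) = 0 := by
  simp [hl, apply_self_eq_neg_one hLie hl hh₀]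

lemma apply_bracket_right_eq_zero (hLie : ∀ x, b x x = 0) (hl : ∀ x, b h₀ x = x + θ x • h₀)
    (hh₀ : h₀ ≠ 0) (w : L) : θ (b w h₀) = 0 := by
  simp [swap_eq_neg_of_sq_eq_zero hLie h₀ w, apply_bracket_left_eq_zero hLie hl hh₀]

lemma two_eq_zero_of_apply_bracket_ne_zero (hb : IsLeibniz b) (hLie : ∀ x, b x x = 0)
    (hl : ∀ x, b h₀ x = x + θ x • h₀) (hh₀ : h₀ ≠ 0) {x y : L} (hxy : θ (b x y) ≠ 0) :
    (2 : F) = 0 := by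
  have e := congrArg θ (bracket_eq_of_left_mul hb hLie hl x y)
  simp only [map_add, map_sub, map_smul, apply_self_eq_neg_one hLie hl hh₀, smul_eq_mul] at e
  exact (mul_eq_zero.1 (by linear_combination e : (2 : F) * θ (b x y) = 0)).resolve_right hxy

lemma isAlmostAbelianWith_neg (hb : IsLeibniz b) (hLie : ∀ x, b x x = 0)
    (hl : ∀ x, b h₀ x = x + θ x • h₀) (hh₀ : h₀ ≠ 0) (hγ : ∀ x y, θ (b x y) = 0) :
    IsAlmostAbelianWith b (-h₀) := by
  have hneg : θ (-h₀) = 1 := by simp [apply_self_eq_neg_one hLie hl hh₀]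
  have hfix : ∀ z, θ z = 0 → b z (-h₀) = z := fun z hz => by
    simp [swap_eq_neg_of_sq_eq_zero hLie h₀ z, hl, hz]
  have hL2 : bspan b ⊤ ⊤ = LinearMap.ker θ := le_antisymm (bspan_le fun x _ y _ => hγ x y)
    fun z hz => hfix z hz ▸ mem_bspan mem_top mem_top
  rw [IsAlmostAbelianWith, hL2]
  refine ⟨(isCompl_ker_span_singleton hneg).inf_eq_bot,
    (isCompl_ker_span_singleton hneg).sup_eq_top, eq_bot_iff.2 (bspan_le fun p hp q hq => ?_),
    fun x hx => hfix x hx⟩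
  rw [bracket_eq_of_left_mul hb hLie hl, LinearMap.mem_ker.1 hp, LinearMap.mem_ker.1 hq, hγ]
  simp

lemma isK₂Basis (hb : IsLeibniz b) (hLie : ∀ x, b x x = 0) (hl : ∀ x, b h₀ x = x + θ x • h₀)
    (hh₀ : h₀ ≠ 0) {y₁ z₁ : L} (hy₁ : θ y₁ = 0) (hz₁ : θ z₁ = 0) (hyz : θ (b y₁ z₁) = 1) :
    IsK₂Basis b y₁ z₁ h₀ := by
  have hself := apply_self_eq_neg_one hLie hl hh₀
  have hbr := bracket_eq_of_left_mul hb hLie hl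
  have hswap := swap_eq_neg_of_sq_eq_zero hLie
  have hy₁z₁ : b y₁ z₁ = h₀ := by rw [hbr, hy₁, hz₁, hyz]; simp
  have hneg : ∀ w : L, -w = w := fun w => by
    rw [neg_eq_iff_add_eq_zero, ← two_smul F,
      two_eq_zero_of_apply_bracket_ne_zero hb hLie hl hh₀ (hyz ▸ one_ne_zero), zero_smul]
  have hspan : ∀ w, w = θ (b w z₁) • y₁ - θ (b w y₁) • z₁ + θ w • h₀ := fun w => by
    have hwy := hbr w y₁
    have hwz := hbr w z₁
    rw [hy₁] at hwy
    rw [hz₁] at hwz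
    have hz₁y₁ : b z₁ y₁ = -h₀ := by rw [hswap, hy₁z₁]
    have e := hb w y₁ z₁
    rw [hwy, hwz, hy₁z₁, hswap h₀ w] at e
    simp only [map_add, map_sub, map_smul, LinearMap.add_apply, LinearMap.sub_apply,
      LinearMap.smul_apply, hz₁y₁, hy₁z₁, hl, hy₁, hz₁] at e
    linear_combination (norm := module) -e
  refine ⟨?_, eq_top_iff'.2 fun w => ?_, hy₁z₁, by rw [hswap, hl, hz₁, zero_smul, add_zero,
    hneg], by rw [hl, hy₁, zero_smul, add_zero]⟩
  · rw [Fintype.linearIndependent_iff]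
    intro g hg
    simp only [Fin.sum_univ_three, Matrix.cons_val_zero, Matrix.cons_val_one,
      Matrix.cons_val_two, Matrix.head_cons, Matrix.tail_cons] at hg
    have e0 := congrArg (fun w => θ (b w z₁)) hg
    have e1 := congrArg (fun w => θ (b y₁ w)) hg
    have e2 := congrArg θ hg
    simp only [map_add, map_smul, LinearMap.add_apply, LinearMap.smul_apply, hLie, hyz,
      apply_bracket_left_eq_zero hLie hl hh₀, apply_bracket_right_eq_zero hLie hl hh₀, hy₁, hz₁,
      hself, map_zero, LinearMap.zero_apply, smul_eq_mul] at e0 e1 e2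
    intro i
    fin_cases i
    · simpa using e0
    · simpa using e1
    · simpa using e2
  · rw [hspan w]
    exact add_mem (sub_mem (smul_mem _ _ (subset_span (by simp)))
      (smul_mem _ _ (subset_span (by simp)))) (smul_mem _ _ (subset_span (by simp)))

lemma isAlmostAbelianWith_or_isK₂Basis (hb : IsLeibniz b) (hLie : ∀ x, b x x = 0)
    (hh₀ : h₀ ≠ 0) (hl : ∀ x, b h₀ x - x ∈ F ∙ h₀) :
    IsAlmostAbelianWith b (-h₀) ∨ ringChar F = 2 ∧ ∃ x y z, IsK₂Basis b x y z := by
  obtain ⟨θ, hθ⟩ := exists_eq_smul_of_forall_mem_span_singleton hh₀ (g := b h₀ - .id) hl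
  have hl' : ∀ x, b h₀ x = x + θ x • h₀ := fun x => by
    rw [← hθ]
    simp
  by_cases hγ : ∀ x y, θ (b x y) = 0
  · exact Or.inl (isAlmostAbelianWith_neg hb hLie hl' hh₀ hγ)
  obtain ⟨u, v, huv⟩ : ∃ u v, θ (b u v) ≠ 0 := by simpa using hγ
  have hself := apply_self_eq_neg_one hLie hl' hh₀
  have hγl := apply_bracket_left_eq_zero hLie hl' hh₀
  have hγr := apply_bracket_right_eq_zero hLie hl' hh₀
  -- project `u` and `v` to `ker θ` along `h₀` and rescale so that `θ [y₁, z₁] = 1`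
  refine Or.inr ⟨ringChar.eq_iff.2 (CharTwo.of_one_ne_zero_of_two_eq_zero one_ne_zero
    (two_eq_zero_of_apply_bracket_ne_zero hb hLie hl' hh₀ huv)), _, _, _,
    isK₂Basis (y₁ := u + θ u • h₀) (z₁ := (θ (b u v))⁻¹ • (v + θ v • h₀)) hb hLie hl' hh₀
      (by simp [hself]) (by simp [hself]) ?_⟩
  simp [hγl, hγr, huv]

end LieCase

section Classification

variable {b : L →ₗ[F] L →ₗ[F] L} {H : Submodule F L} {ψ α β : L →ₗ[F] F} {x₀ : L}

lemma eq_bot_or_isSqSpanComplement (hb : IsLeibniz b) (hcore : coreOf b H = ⊥)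
    (hα : IsLeftScalar b H α) (hβ : IsRightScalar b H β) (hψ : H ≤ LinearMap.ker ψ)
    (hx₀ : ψ x₀ = 1) (hα0 : ∀ h ∈ H, α h = 0) :
    H = ⊥ ∨ ∃ h, IsSqSpanComplement b h := by
  have hN := eq_bot_of_coreOf_eq_bot hcore (isIdeal_inf_ker_right hb hα hβ hψ hx₀ hα0)
    inf_le_left
  by_cases hβ0 : ∀ h ∈ H, β h = 0
  · exact Or.inl (by rwa [inf_eq_left.2 fun h hh => hβ0 h hh] at hN)
  obtain ⟨h₁, hh₁, hβh₁⟩ : ∃ h ∈ H, β h ≠ 0 := by simpa using hβ0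
  obtain ⟨h₀, rfl, hβh₀⟩ := exists_eq_span_singleton_of_inf_ker_eq_bot hN hh₁ hβh₁
  have hh₀ := mem_span_singleton_self (R := F) h₀
  exact Or.inr ⟨h₀, hb.isSqSpanComplement (x₀ := x₀) (fun h => by simpa [hx₀] using hψ h)
    (fun y => by simpa [hα0 h₀ hh₀] using hα h₀ hh₀ y)
    (fun x => by simpa [hβh₀] using hβ h₀ hh₀ x)⟩

lemma isLie_and_isAlmostAbelian_or_isK₂ (hb : IsLeibniz b) (hH : IsQuasiIdeal b H)
    (hcore : coreOf b H = ⊥) (hα : IsLeftScalar b H α) (hβ : IsRightScalar b H β)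
    (hψ : H ≤ LinearMap.ker ψ) (hx₀ : ψ x₀ = 1) (hcodim : ∀ x, H ⊔ (F ∙ x) ≠ ⊤)
    (hα0 : ∃ h ∈ H, α h ≠ 0) :
    (∀ x, b x x = 0) ∧
      ((∃ a, IsAlmostAbelianWith b a) ∨ ringChar F = 2 ∧ ∃ x y z, IsK₂Basis b x y z) := by
  obtain ⟨h₁, hh₁, hαh₁⟩ := hα0
  have hβα : ∀ k ∈ H, β k = -α k := fun k hk => by
    linear_combination (mul_eq_zero.1 (hα.mul_add_eq_zero hb hH hβ hψ hx₀ hh₁ hk)).resolve_left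
      hαh₁
  have hN := eq_bot_of_coreOf_eq_bot hcore (isIdeal_inf_ker_left hb hα hβ hψ hx₀ hcodim hβα)
    inf_le_left
  obtain ⟨h₀, rfl, hαh₀⟩ := exists_eq_span_singleton_of_inf_ker_eq_bot hN hh₁ hαh₁
  have hl : ∀ x, b h₀ x - x ∈ F ∙ h₀ := fun x => by
    simpa [hαh₀] using hα h₀ (mem_span_singleton_self h₀) x
  have hI := eq_bot_of_coreOf_eq_bot hcore hb.isIdeal_sqSpan (hb.sqSpan_le_span_singleton hl)
  have hLie : ∀ x, b x x = 0 := fun x => by simpa [hI] using sq_mem_sqSpan (b := b) x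
  have hh₀ : h₀ ≠ 0 := by
    rintro rfl
    simp at hαh₀
  exact ⟨hLie, (isAlmostAbelianWith_or_isK₂Basis hb hLie hh₀ hl).imp (⟨-h₀, ·⟩) id⟩

end Classification

/-- Classification of core-free quasi-ideals of a Leibniz algebra. -/
theorem corefree_quasiIdeal_classification (b : L →ₗ[F] L →ₗ[F] L) (hb : IsLeibniz b)
    (H : Submodule F L) (hH : IsQuasiIdeal b H) (hcore : coreOf b H = ⊥) :
    -- (i) H = 0
    H = ⊥ ∨
    -- (ii) H has codimension one in L
    Module.rank F (L ⧸ H) = 1 ∨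
    -- (iii) L is a Lie algebra which is almost abelian or isomorphic to K₂
    ((∀ x : L, b x x = 0) ∧
      ((∃ a : L, bspan b ⊤ ⊤ ⊓ Submodule.span F {a} = ⊥ ∧
          bspan b ⊤ ⊤ ⊔ Submodule.span F {a} = ⊤ ∧
          bspan b (bspan b ⊤ ⊤) (bspan b ⊤ ⊤) = ⊥ ∧
          ∀ x ∈ bspan b ⊤ ⊤, b x a = x) ∨
        (ringChar F = 2 ∧ ∃ x y z : L, LinearIndependent F ![x, y, z] ∧
          Submodule.span F {x, y, z} = ⊤ ∧
          b x y = z ∧ b y z = y ∧ b z x = x))) ∨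
    -- (iv) L = I ∔ Fh with [x,h] = x, [h,x] = 0 for all x ∈ I and [h,h] = 0
    (∃ h : L, sqSpan b ⊓ Submodule.span F {h} = ⊥ ∧
      sqSpan b ⊔ Submodule.span F {h} = ⊤ ∧
      (∀ x ∈ sqSpan b, b x h = x ∧ b h x = 0) ∧ b h h = 0) := by
  by_cases hcodim : ∃ x, H ⊔ (F ∙ x) = ⊤
  · obtain ⟨x, hx⟩ := hcodim
    by_cases hxH : x ∈ H
    · rw [sup_eq_left.2 ((span_singleton_le_iff_mem x H).2 hxH)] at hx
      exact Or.inl (eq_bot_of_coreOf_eq_bot hcore (hx ▸ le_top) le_rfl)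
    · exact Or.inr (Or.inl (rank_quotient_eq_one_of_sup_span_eq_top hxH hx))
  have hcodim : ∀ x, H ⊔ (F ∙ x) ≠ ⊤ := by simpa using hcodim
  obtain ⟨ψ, hψ, x₀, hx₀⟩ := exists_le_ker_apply_eq_one (by simpa using hcodim 0)
  have hα := hH.isLeftScalar hψ hx₀
  have hβ := hH.isRightScalar hψ hx₀
  by_cases hα0 : ∀ h ∈ H, (ψ ∘ₗ b.flip x₀) h = 0
  · rcases eq_bot_or_isSqSpanComplement hb hcore hα hβ hψ hx₀ hα0 with hbot | hsplit
    · exact Or.inl hbot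
    · exact Or.inr (Or.inr (Or.inr hsplit))
  · exact Or.inr (Or.inr (Or.inl (isLie_and_isAlmostAbelian_or_isK₂ hb hH hcore hα hβ hψ hx₀
      hcodim (by simpa using hα0))))
end

section
/- Let F be a field of characteristic 2 and let L be a Leibniz algebra over F of the form L = C ∔ Fz ∔ Fh (vector-space direct sum, z ≠ 0, h ≠ 0) such that: [z,u] = [u,z] = 0 for all u ∈ L; [c,c'] = [c',c] ∈ Fz for all c, c' ∈ C; for every nonzero c ∈ C, [c,c] = λ_c z where λ_c ∈ F is not a square in F; [c,h] = [h,c] = c for all c ∈ C; and [h,h] = z. Then every subalgebra of L is a quasi-ideal of L. -/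
variable {F L : Type*} [Field F] [AddCommGroup L] [Module F L]

/-- In a Leibniz algebra of the special extraspecial form over a field of
characteristic 2 (with non-square structure constants), every subalgebra is a quasi-ideal. -/
theorem every_subalgebra_quasiIdeal_of_special_form (b : L →ₗ[F] L →ₗ[F] L)
    (hb : IsLeibniz b) (hchar : ringChar F = 2)
    (C : Submodule F L) (z h : L) (hz : z ≠ 0) (hh : h ≠ 0)
    (hspan : C ⊔ Submodule.span F {z} ⊔ Submodule.span F {h} = ⊤)
    (hindep : ∀ c ∈ C, ∀ α β : F, c + α • z + β • h = 0 → c = 0 ∧ α = 0 ∧ β = 0)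
    (hzc : ∀ u : L, b z u = 0 ∧ b u z = 0)
    (hcc : ∀ c ∈ C, ∀ c' ∈ C, b c c' = b c' c ∧ b c c' ∈ Submodule.span F {z})
    (hsq : ∀ c ∈ C, c ≠ 0 → ∃ l : F, b c c = l • z ∧ ∀ α : F, α ^ 2 ≠ l)
    (hch : ∀ c ∈ C, b c h = c ∧ b h c = c)
    (hhh : b h h = z) :
    ∀ U : Submodule F L, IsSubalgebra b U → IsQuasiIdeal b U := by
  haveI : CharP F 2 := hchar ▸ ringChar.charP F
  have h2 : (2 : F) = 0 := CharTwo.two_eq_zero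
  have hz1 : ∀ u : L, b z u = 0 := fun u => (hzc u).1
  have hz2 : ∀ u : L, b u z = 0 := fun u => (hzc u).2
  -- decomposition of any element
  have decomp : ∀ x : L, ∃ c ∈ C, ∃ α β : F, x = c + α • z + β • h := by
    intro x
    have hx : x ∈ C ⊔ Submodule.span F {z} ⊔ Submodule.span F {h} := by
      rw [hspan]; exact Submodule.mem_top
    rcases Submodule.mem_sup.mp hx with ⟨v, hv, w, hw, rfl⟩
    rcases Submodule.mem_sup.mp hv with ⟨c, hc, w', hw', rfl⟩
    rcases Submodule.mem_span_singleton.mp hw' with ⟨α, rfl⟩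
    rcases Submodule.mem_span_singleton.mp hw with ⟨β, rfl⟩
    exact ⟨c, hc, α, β, rfl⟩
  -- key bracket formula
  have key : ∀ x y : L, ∃ p q γ : F, b x y = p • x + q • y + γ • z := by
    intro x y
    obtain ⟨c, hc, α, β, rfl⟩ := decomp x
    obtain ⟨c', hc', α', β', rfl⟩ := decomp y
    obtain ⟨γ₀, hγ₀⟩ := Submodule.mem_span_singleton.mp (hcc c hc c' hc').2
    have expand : b (c + α • z + β • h) (c' + α' • z + β' • h)
        = γ₀ • z + β' • c + β • c' + (β * β') • z := by
      simp only [map_add, map_smul, LinearMap.add_apply, LinearMap.smul_apply,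
        hz1, hz2, hhh, (hch c hc).1, (hch c hc).2, (hch c' hc').1, (hch c' hc').2,
        smul_zero, zero_add, add_zero, ← hγ₀]
      module
    refine ⟨β', β, γ₀ + β * β' - β' * α - β * α', ?_⟩
    rw [expand]
    have h2h : (β' * β + β * β') • h = (0 : L) := by
      rw [show β' * β + β * β' = 2 * (β * β') by ring, h2, zero_mul, zero_smul]
    have : β' • (c + α • z + β • h) + β • (c' + α' • z + β' • h)
        + (γ₀ + β * β' - β' * α - β * α') • z
        = γ₀ • z + β' • c + β • c' + (β * β') • z + (β' * β + β * β') • h := by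
      simp only [smul_add, smul_smul, add_smul, sub_smul]
      abel
    rw [this, h2h, add_zero]
  -- squares of elements outside span{z}
  have sq : ∀ x : L, x ∉ Submodule.span F {z} → ∃ μ : F, μ ≠ 0 ∧ b x x = μ • z := by
    intro x hxz
    obtain ⟨c, hc, α, β, rfl⟩ := decomp x
    have expand : b (c + α • z + β • h) (c + α • z + β • h)
        = b c c + (β * β) • z + (2 * β) • c := by
      simp only [map_add, map_smul, LinearMap.add_apply, LinearMap.smul_apply,
        hz1, hz2, hhh, (hch c hc).1, (hch c hc).2, smul_zero, zero_add, add_zero]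
      module
    rw [h2, zero_mul, zero_smul, add_zero] at expand
    by_cases hc0 : c = 0
    · subst hc0
      have hβ : β ≠ 0 := by
        intro hβ0
        apply hxz
        rw [hβ0, zero_add, zero_smul, add_zero]
        exact Submodule.smul_mem _ _ (Submodule.mem_span_singleton_self z)
      refine ⟨β * β, mul_ne_zero hβ hβ, ?_⟩
      rw [expand]; simp
    · obtain ⟨l, hl, hlns⟩ := hsq c hc hc0
      refine ⟨l + β * β, ?_, ?_⟩
      · intro h0
        apply hlns β
        have : β * β = -l := by linear_combination h0
        rw [pow_two, this, CharTwo.neg_eq]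
      · rw [expand, hl, ← add_smul]
  intro U hU K
  by_cases hzU : z ∈ U
  · -- z ∈ U
    apply sup_le <;>
      · refine Submodule.span_le.mpr ?_
        rintro w ⟨x, hx, y, hy, rfl⟩
        obtain ⟨p, q, γ, heq⟩ := key x y
        rw [heq]
        refine Submodule.add_mem _ (Submodule.add_mem _ ?_ ?_) ?_
        · first
          | exact Submodule.mem_sup_left (Submodule.smul_mem _ _ hx)
          | exact Submodule.mem_sup_right (Submodule.smul_mem _ _ hx)
        · first
          | exact Submodule.mem_sup_left (Submodule.smul_mem _ _ hy)
          | exact Submodule.mem_sup_right (Submodule.smul_mem _ _ hy)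
        · exact Submodule.mem_sup_left (Submodule.smul_mem _ _ hzU)
  · -- z ∉ U : then U ≤ span{z}
    have hUz : U ≤ Submodule.span F {z} := by
      intro x hx
      by_contra hxz
      obtain ⟨μ, hμ, hbxx⟩ := sq x hxz
      have hmem : b x x ∈ U :=
        hU (Submodule.subset_span ⟨x, hx, x, hx, rfl⟩)
      rw [hbxx] at hmem
      exact hzU (by simpa [smul_smul, inv_mul_cancel₀ hμ] using U.smul_mem μ⁻¹ hmem)
    apply sup_le <;>
      · refine Submodule.span_le.mpr ?_
        rintro w ⟨x, hx, y, hy, rfl⟩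
        first
        | · obtain ⟨α, rfl⟩ := Submodule.mem_span_singleton.mp (hUz hx)
            simp [hz1]
        | · obtain ⟨α, rfl⟩ := Submodule.mem_span_singleton.mp (hUz hy)
            simp [hz2]
end

section
/- Let L be a Leibniz algebra over a field F with dim I = 1 and [x,x] ≠ 0 for all x ∈ L \ I, where I is the span of {[x,x] : x ∈ L}. Then I ⊆ Z(L). -/
variable {F L : Type*} [Field F] [AddCommGroup L] [Module F L]

/-- If `dim I = 1` and `[x,x] ≠ 0` for all `x ∈ L \\ I`,
then `I ⊆ Z(L)`. -/
theorem sqSpan_le_center (b : L →ₗ[F] L →ₗ[F] L) (hb : IsLeibniz b)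
    (hdim : Module.rank F ↥(sqSpan b) = 1)
    (hsq : ∀ x : L, x ∉ sqSpan b → b x x ≠ 0) :
    sqSpan b ≤ lcenter b := by
  -- [L, I] = 0 : every square bracket on the right vanishes
  have hxi : ∀ x : L, ∀ i ∈ sqSpan b, b x i = 0 := by
    intro x i hi
    have hle : sqSpan b ≤ LinearMap.ker (b x) := by
      rw [sqSpan, Submodule.span_le]
      rintro z ⟨y, rfl⟩
      have h := hb x y y
      rw [sub_self] at h
      exact h
    exact hle hi
  -- symmetrized brackets lie in I
  have hsum : ∀ p q : L, b p q + b q p ∈ sqSpan b := by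
    intro p q
    have h1 : b (p + q) (p + q) ∈ sqSpan b := Submodule.subset_span ⟨p + q, rfl⟩
    have h2 : b p p ∈ sqSpan b := Submodule.subset_span ⟨p, rfl⟩
    have h3 : b q q ∈ sqSpan b := Submodule.subset_span ⟨q, rfl⟩
    have key : b p q + b q p = b (p + q) (p + q) - b p p - b q q := by
      simp only [map_add, LinearMap.add_apply]
      abel
    rw [key]
    exact Submodule.sub_mem _ (Submodule.sub_mem _ h1 h2) h3
  -- I is a right ideal
  have hideal : ∀ i ∈ sqSpan b, ∀ x : L, b i x ∈ sqSpan b := by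
    intro i hi x
    have hle : sqSpan b ≤ (sqSpan b).comap (b.flip x) := by
      conv_lhs => rw [sqSpan]
      rw [Submodule.span_le]
      rintro z ⟨a, rfl⟩
      simp only [Submodule.mem_comap, LinearMap.flip_apply, SetLike.mem_coe]
      have key : b (b a a) x = b a (b a x) + b (b a x) a :=
        sub_eq_iff_eq_add.mp (hb a a x).symm
      rw [key]
      exact hsum a (b a x)
    exact hle hi
  -- pick a spanning vector u of I
  obtain ⟨v₀, hv₀⟩ := rank_le_one_iff.mp hdim.le
  set u : L := (v₀ : L) with hudef
  have hu : u ∈ sqSpan b := v₀.2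
  have hspan : ∀ v ∈ sqSpan b, ∃ r : F, v = r • u := by
    intro v hv
    obtain ⟨r, hr⟩ := hv₀ ⟨v, hv⟩
    exact ⟨r, by simpa using congrArg (Subtype.val) hr.symm⟩
  have hune : u ≠ 0 := by
    intro h0
    have hbot : sqSpan b = ⊥ := by
      rw [Submodule.eq_bot_iff]
      intro v hv
      obtain ⟨r, hr⟩ := hspan v hv
      rw [hr, h0, smul_zero]
    rw [hbot] at hdim
    simp [rank_bot] at hdim
  have huu : b u u = 0 := hxi u u hu
  -- key claim: [u, x] = 0 for all x
  have hux : ∀ x : L, b u x = 0 := by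
    intro x
    obtain ⟨μ, hμ⟩ := hspan (b u x) (hideal u hu x)
    by_contra hne
    have hμ0 : μ ≠ 0 := by
      rintro rfl
      rw [zero_smul] at hμ
      exact hne hμ
    obtain ⟨c, hc⟩ := hspan (b x x) (Submodule.subset_span ⟨x, rfl⟩)
    set t : F := -c / μ with ht
    have hy : b (x + t • u) (x + t • u) = 0 := by
      simp only [map_add, map_smul, LinearMap.add_apply, LinearMap.smul_apply]
      rw [hc, hμ, hxi x u hu, huu]
      rw [smul_smul, ht, div_mul_cancel₀ _ hμ0]
      simp [← add_smul]
    have hyI : x + t • u ∈ sqSpan b := by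
      by_contra hnI
      exact hsq _ hnI hy
    have hxI : x ∈ sqSpan b := by
      have := Submodule.sub_mem _ hyI (Submodule.smul_mem (sqSpan b) t hu)
      simpa using this
    obtain ⟨r, hr⟩ := hspan x hxI
    rw [hr, map_smul, huu, smul_zero] at hμ
    exact hne (by rw [hr, map_smul, huu, smul_zero])
  -- conclude
  intro i hi
  intro x
  obtain ⟨r, hr⟩ := hspan i hi
  constructor
  · rw [hr]
    simp [hux x]
  · exact hxi x i hi
end
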